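/- Let ξ₁, ξ₂, … be i.i.d. real random variables taking values in (0, 1 + 1/(d²−1)) for some d ≥ 2. Then ∑_{k=1}^n (ξ_k/n) ∏_{i=1}^{k-1} (1 − ξ_i/n) converges almost surely to 1 − e^{−E ξ₁} as n → ∞. -/

import Mathlib

open MeasureTheory ProbabilityTheory Filter

private lemma tele (b : ℕ → ℝ) (m : ℕ) :
    ∑ k ∈ Finset.range m, (1 - b k) * ∏ i ∈ Finset.range k, b i
      = 1 - ∏ i ∈ Finset.range m, b i := by
  induction m with
  | zero => simp
  | succ m ih =>
    rw [Finset.sum_range_succ, Finset.prod_range_succ, ih]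
    ring

private lemma log_lb {x : ℝ} (h0 : 0 ≤ x) (h1 : x ≤ 1/2) :
    -x - 2 * x ^ 2 ≤ Real.log (1 - x) := by
  have hx : 0 < 1 - x := by linarith
  have h := Real.log_le_sub_one_of_pos (x := (1 - x)⁻¹) (by positivity)
  rw [Real.log_inv] at h
  have hlog : 1 - (1 - x)⁻¹ ≤ Real.log (1 - x) := by linarith
  have hinv : (1 - x)⁻¹ ≤ 2 := by
    rw [inv_le_comm₀ hx (by norm_num)]; linarith
  have key : -x - 2 * x ^ 2 ≤ 1 - (1 - x)⁻¹ := by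
    have : 1 - (1 - x)⁻¹ = -x / (1 - x) := by
      field_simp; ring
    rw [this]
    have hxx : -x / (1 - x) = -x - x ^ 2 / (1 - x) := by
      field_simp; ring
    rw [hxx]
    have : x ^ 2 / (1 - x) = x ^ 2 * (1 - x)⁻¹ := by ring
    nlinarith [sq_nonneg x]
  linarith

/-- Deterministic lemma. -/
private lemma det {C : ℝ} (hC : 0 < C) (a : ℕ → ℝ) (ha : ∀ i, a i ∈ Set.Ioo 0 C)
    {L : ℝ} (hL : Tendsto (fun n : ℕ => (∑ i ∈ Finset.range n, a i) / n) atTop (nhds L)) :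
    Tendsto
      (fun n : ℕ => ∑ k ∈ Finset.range n, (a k / n) * ∏ i ∈ Finset.range k, (1 - a i / n))
      atTop (nhds (1 - Real.exp (-L))) := by
  -- rewrite via telescoping
  have htele : ∀ n : ℕ,
      ∑ k ∈ Finset.range n, (a k / n) * ∏ i ∈ Finset.range k, (1 - a i / n)
        = 1 - ∏ i ∈ Finset.range n, (1 - a i / n) := by
    intro n
    have := tele (fun i => 1 - a i / n) n
    simpa using this
  simp only [htele]
  have hprod : Tendsto (fun n : ℕ => ∏ i ∈ Finset.range n, (1 - a i / n)) atTop
      (nhds (Real.exp (-L))) := by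
    -- eventually n ≥ 2C, so each a i / n ≤ 1/2
    have hev : ∀ᶠ n : ℕ in atTop, (2 * C ≤ (n : ℝ)) := by
      have := tendsto_natCast_atTop_atTop (R := ℝ)
      exact this.eventually_ge_atTop (2 * C)
    -- the log sum
    set f : ℕ → ℝ := fun n => ∑ i ∈ Finset.range n, Real.log (1 - a i / n) with hf
    have hsmall : ∀ n : ℕ, 2 * C ≤ (n : ℝ) → ∀ i, 0 ≤ a i / n ∧ a i / n ≤ 1/2 := by
      intro n hn i
      have hpos : (0 : ℝ) < n := by linarith
      constructor
      · exact div_nonneg (le_of_lt (ha i).1) hpos.le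
      · rw [div_le_iff₀ hpos]
        nlinarith [(ha i).2.le]
    have hflim : Tendsto f atTop (nhds (-L)) := by
      have hub : ∀ᶠ n : ℕ in atTop, f n ≤ -((∑ i ∈ Finset.range n, a i) / n) := by
        filter_upwards [hev] with n hn
        have hpos : (0 : ℝ) < n := by linarith
        have heq : -((∑ i ∈ Finset.range n, a i) / n)
            = ∑ i ∈ Finset.range n, -(a i / n) := by
          rw [Finset.sum_neg_distrib, ← Finset.sum_div]
        rw [heq, hf]
        apply Finset.sum_le_sum
        intro i _
        have := Real.log_le_sub_one_of_pos (x := 1 - a i / n)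
          (by have := (hsmall n hn i).2; linarith)
        linarith
      have hlb : ∀ᶠ n : ℕ in atTop,
          -((∑ i ∈ Finset.range n, a i) / n) - 2 * C ^ 2 / n ≤ f n := by
        filter_upwards [hev] with n hn
        have hpos : (0 : ℝ) < n := by linarith
        have step : ∀ i ∈ Finset.range n,
            -(a i / n) - 2 * C ^ 2 / n ^ 2 ≤ Real.log (1 - a i / n) := by
          intro i _
          have h1 := (hsmall n hn i).1
          have h2 := (hsmall n hn i).2
          have := log_lb h1 h2
          have hle : (a i / n) ^ 2 ≤ C ^ 2 / n ^ 2 := by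
            rw [div_pow]
            apply div_le_div_of_nonneg_right _ (by positivity)
            nlinarith [(ha i).1, (ha i).2]
          have h2x : 2 * C ^ 2 / (n : ℝ) ^ 2 = 2 * (C ^ 2 / n ^ 2) := by ring
          rw [h2x]
          linarith
        have hsum := Finset.sum_le_sum step
        have heq : ∑ i ∈ Finset.range n, (-(a i / n) - 2 * C ^ 2 / n ^ 2)
            = -((∑ i ∈ Finset.range n, a i) / n) - n * (2 * C ^ 2 / n ^ 2) := by
          rw [Finset.sum_sub_distrib, Finset.sum_neg_distrib, ← Finset.sum_div]
          simp [Finset.sum_const, nsmul_eq_mul]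
        rw [heq] at hsum
        have : (n : ℝ) * (2 * C ^ 2 / n ^ 2) = 2 * C ^ 2 / n := by
          field_simp
        rw [this] at hsum
        exact hsum
      -- squeeze
      have hg : Tendsto (fun n : ℕ => -((∑ i ∈ Finset.range n, a i) / n) - 2 * C ^ 2 / n)
          atTop (nhds (-L)) := by
        have h1 : Tendsto (fun n : ℕ => -((∑ i ∈ Finset.range n, a i) / n)) atTop
            (nhds (-L)) := hL.neg
        have h2 : Tendsto (fun n : ℕ => 2 * C ^ 2 / (n : ℝ)) atTop (nhds 0) :=
          tendsto_const_div_atTop_nhds_zero_nat _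
        simpa using h1.sub h2
      exact tendsto_of_tendsto_of_tendsto_of_le_of_le' hg hL.neg hlb hub
    have hexp : Tendsto (fun n => Real.exp (f n)) atTop (nhds (Real.exp (-L))) :=
      (Real.continuous_exp.tendsto _).comp hflim
    apply hexp.congr'
    filter_upwards [hev] with n hn
    rw [hf, Real.exp_sum]
    apply Finset.prod_congr rfl
    intro i _
    exact Real.exp_log (by have := (hsmall n hn i).2; linarith)
  exact (tendsto_const_nhds.sub hprod)

/-- For i.i.d. random variables `ξ` with values in `(0, 1 + 1/(d²-1))`, the sums
`∑_{k<n} (ξ k / n) ∏_{i<k} (1 - ξ i / n)` converge a.s. to `1 - exp (-E ξ 0)`. -/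
theorem sum_prod_tendsto_one_sub_exp_neg_expectation
    {Ω : Type*} [MeasurableSpace Ω] {μ : Measure Ω} [IsProbabilityMeasure μ]
    (d : ℕ) (hd : 2 ≤ d) (ξ : ℕ → Ω → ℝ)
    (hmeas : ∀ k, Measurable (ξ k))
    (hindep : iIndepFun ξ μ)
    (hident : ∀ k, μ.map (ξ k) = μ.map (ξ 0))
    (hbound : ∀ k, ∀ᵐ ω ∂μ, ξ k ω ∈ Set.Ioo (0 : ℝ) (1 + 1 / ((d : ℝ) ^ 2 - 1))) :
    ∀ᵐ ω ∂μ, Tendsto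
      (fun n : ℕ => ∑ k ∈ Finset.range n, (ξ k ω / n) * ∏ i ∈ Finset.range k, (1 - ξ i ω / n))
      atTop (nhds (1 - Real.exp (-∫ ω, ξ 0 ω ∂μ))) := by
  set C : ℝ := 1 + 1 / ((d : ℝ) ^ 2 - 1) with hCdef
  have hd2 : (2 : ℝ) ≤ (d : ℝ) := by exact_mod_cast hd
  have hden : (3 : ℝ) ≤ (d : ℝ) ^ 2 - 1 := by nlinarith
  have hC : 0 < C := by
    have : (0 : ℝ) < 1 / ((d : ℝ) ^ 2 - 1) := by positivity
    simp only [hCdef]; linarith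
  -- integrability
  have hint : Integrable (ξ 0) μ := by
    refine ⟨(hmeas 0).aestronglyMeasurable, ?_⟩
    apply HasFiniteIntegral.of_bounded (C := C)
    filter_upwards [hbound 0] with ω hω
    rw [Real.norm_eq_abs, abs_le]
    exact ⟨by linarith [hω.1], hω.2.le⟩
  -- ident distrib
  have hident' : ∀ i, IdentDistrib (ξ i) (ξ 0) μ μ := fun i =>
    ⟨(hmeas i).aemeasurable, (hmeas 0).aemeasurable, hident i⟩
  have hpair : Pairwise (Function.onFun (IndepFun · · μ) ξ) := fun i j hij =>
    hindep.indepFun hij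
  have hslln := strong_law_ae_real ξ hint hpair hident'
  have hball : ∀ᵐ ω ∂μ, ∀ k, ξ k ω ∈ Set.Ioo (0 : ℝ) C := ae_all_iff.2 hbound
  filter_upwards [hslln, hball] with ω hω hb
  exact det hC (fun i => ξ i ω) hb hω
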